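/- Let V₁, V₂ be doubly commuting isometries on a Hilbert space H with P_∞^1 = P_∞^2 = 0, where P_∞^i is the projection onto ⋂_{n≥0} V_i^n(H). Set Q(n) = (P^1_{n₁} − P^1_{n₁+1})(P^2_{n₂} − P^2_{n₂+1}) for n ∈ ℕ², where P^i_l is the projection onto V_i^l(H). Then the projections {Q(n) : n ∈ ℕ²} are mutually orthogonal and ∑_{n∈ℕ²} Q(n) = I (strongly). -/

import Mathlib

open ContinuousLinearMap Filter Topology Finset

noncomputable section WanderingAux

variable {H : Type*} [NormedAddCommGroup H] [InnerProductSpace ℂ H] [CompleteSpace H]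

local notation "⟪" x ", " y "⟫" => @inner ℂ _ _ x y

/-- For an isometry, `star V * V = 1`. -/
lemma wp_star_mul_self (V : H →L[ℂ] H) (h : ∀ x, ‖V x‖ = ‖x‖) : star V * V = 1 := by
  ext x
  apply ext_inner_left ℂ
  intro y
  rw [mul_apply_eq_comp, star_eq_adjoint, adjoint_inner_right, one_apply_eq_self]
  exact (LinearMap.norm_map_iff_inner_map_map (𝕜 := ℂ) V).1 h y x

lemma wp_pow_norm (V : H →L[ℂ] H) (h : ∀ x, ‖V x‖ = ‖x‖) (n : ℕ) (x : H) :
    ‖(V ^ n) x‖ = ‖x‖ := by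
  induction n with
  | zero => simp
  | succ n ih =>
    rw [pow_succ', mul_apply_eq_comp, h, ih]

lemma wp_unit (V : H →L[ℂ] H) (hV : star V * V = 1) (n : ℕ) :
    (star V) ^ n * V ^ n = 1 := by
  induction n with
  | zero => simp
  | succ n ih =>
    calc (star V) ^ (n+1) * V ^ (n+1)
        = (star V) ^ n * ((star V * V) * V ^ n) := by
          rw [pow_succ, pow_succ']; simp only [mul_assoc]
      _ = 1 := by rw [hV, one_mul, ih]

lemma wp_cancel (V : H →L[ℂ] H) (hV : star V * V = 1) (a : ℕ) (X : H →L[ℂ] H) :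
    (star V) ^ a * (V ^ a * X) = X := by
  rw [← mul_assoc, wp_unit V hV, one_mul]

lemma wp_unit_assoc (V : H →L[ℂ] H) (hV : star V * V = 1) (a k : ℕ) (X : H →L[ℂ] H) :
    (star V) ^ a * (V ^ (a + k) * X) = V ^ k * X := by
  rw [pow_add, mul_assoc, wp_cancel V hV]

lemma wp_unit_assoc' (V : H →L[ℂ] H) (hV : star V * V = 1) (a k : ℕ) (X : H →L[ℂ] H) :
    (star V) ^ (a + k) * (V ^ a * X) = (star V) ^ k * X := by
  rw [add_comm, pow_add, mul_assoc, wp_cancel V hV]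

/-- The range projection `P_n = V^n (V^n)^*`. -/
def wpP (V : H →L[ℂ] H) (n : ℕ) : H →L[ℂ] H := V ^ n * (star V) ^ n

lemma wpP_star (V : H →L[ℂ] H) (n : ℕ) : star (wpP V n) = wpP V n := by
  simp [wpP, star_mul, star_pow, star_star]

lemma wpP_mul_le (V : H →L[ℂ] H) (hV : star V * V = 1) {a b : ℕ} (hab : a ≤ b) :
    wpP V a * wpP V b = wpP V b := by
  obtain ⟨k, rfl⟩ := Nat.exists_eq_add_of_le hab
  simp only [wpP, mul_assoc]
  rw [wp_unit_assoc V hV a k, ← mul_assoc, ← pow_add]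



lemma wpP_mul_ge (V : H →L[ℂ] H) (hV : star V * V = 1) {a b : ℕ} (hab : a ≤ b) :
    wpP V b * wpP V a = wpP V b := by
  obtain ⟨k, rfl⟩ := Nat.exists_eq_add_of_le hab
  simp only [wpP, mul_assoc]
  rw [wp_unit_assoc' V hV a k, ← pow_add, add_comm k a]

lemma wpP_idem (V : H →L[ℂ] H) (hV : star V * V = 1) (n : ℕ) :
    wpP V n * wpP V n = wpP V n := wpP_mul_le V hV le_rfl

lemma wpP_contract (V : H →L[ℂ] H) (h : ∀ x, ‖V x‖ = ‖x‖) (n : ℕ) (x : H) :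
    ‖wpP V n x‖ ≤ ‖x‖ := by
  have hnorm : ‖V ^ n‖ ≤ 1 :=
    opNorm_le_bound _ zero_le_one (fun y => by rw [wp_pow_norm V h, one_mul])
  have h1 : wpP V n x = (V ^ n) (((star V) ^ n) x) := rfl
  rw [h1, wp_pow_norm V h]
  calc ‖(star V ^ n) x‖ ≤ ‖star V ^ n‖ * ‖x‖ := le_opNorm _ _
    _ ≤ 1 * ‖x‖ := by
        refine mul_le_mul_of_nonneg_right ?_ (norm_nonneg x)
        rw [← star_pow, star_eq_adjoint]
        calc ‖adjoint (V ^ n)‖ = ‖V ^ n‖ :=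
              (adjoint : (H →L[ℂ] H) ≃ₗᵢ⋆[ℂ] H →L[ℂ] H).norm_map (V ^ n)
          _ ≤ 1 := hnorm
    _ = ‖x‖ := one_mul _

/-- The main strong-convergence lemma: if `⋂ range V^n = ⊥` then `P_N x → 0`. -/
lemma wpP_tendsto (V : H →L[ℂ] H) (h : ∀ x, ‖V x‖ = ‖x‖)
    (hs : (⨅ n : ℕ, LinearMap.range ((V ^ n : H →L[ℂ] H) : H →ₗ[ℂ] H)) = ⊥) (x : H) :
    Tendsto (fun N => wpP V N x) atTop (𝓝 0) := by
  have hV : star V * V = 1 := wp_star_mul_self V h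
  set f : ℕ → H := fun N => wpP V N x with hf
  -- inner product formula
  have hinner : ∀ {N M : ℕ}, N ≤ M → ⟪f N, f M⟫ = ((‖f M‖ : ℂ)) ^ 2 := by
    intro N M hNM
    have hadj : adjoint (wpP V N) = wpP V N := by
      rw [← star_eq_adjoint, wpP_star]
    calc ⟪f N, f M⟫ = ⟪adjoint (wpP V N) x, f M⟫ := by rw [hadj]
      _ = ⟪x, wpP V N (f M)⟫ := adjoint_inner_left _ _ _
      _ = ⟪x, (wpP V N * wpP V M) x⟫ := by rw [mul_apply_eq_comp]
      _ = ⟪x, wpP V M x⟫ := by rw [wpP_mul_le V hV hNM]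
      _ = ⟪x, wpP V M (wpP V M x)⟫ := by
          rw [← mul_apply_eq_comp, wpP_idem V hV]
      _ = ⟪adjoint (wpP V M) x, wpP V M x⟫ := (adjoint_inner_left _ _ _).symm
      _ = ⟪wpP V M x, wpP V M x⟫ := by
          rw [← star_eq_adjoint, wpP_star]
      _ = ((‖f M‖ : ℂ)) ^ 2 := inner_self_eq_norm_sq_to_K _
  set a : ℕ → ℝ := fun N => ‖f N‖ ^ 2 with ha
  have hdiff : ∀ {N M : ℕ}, N ≤ M → ‖f N - f M‖ ^ 2 = a N - a M := by
    intro N M hNM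
    rw [@norm_sub_sq ℂ]
    have h1 : RCLike.re ⟪f N, f M⟫ = ‖f M‖ ^ 2 := by
      rw [hinner hNM]
      simp [← Complex.ofReal_pow]
    rw [h1]; simp only [ha]; ring
  have hanti : Antitone a := by
    intro N M hNM
    simp only [ha]
    have : f M = wpP V M (f N) := by
      simp only [hf, ← mul_apply_eq_comp, wpP_mul_ge V hV hNM]
    have hle : ‖f M‖ ≤ ‖f N‖ := by rw [this]; exact wpP_contract V h M _
    exact pow_le_pow_left₀ (norm_nonneg _) hle 2
  have hbdd : BddBelow (Set.range a) := ⟨0, by rintro r ⟨N, rfl⟩; positivity⟩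
  have hacauchy : CauchySeq a := (tendsto_atTop_ciInf hanti hbdd).cauchySeq
  have hfcauchy : CauchySeq f := by
    rw [Metric.cauchySeq_iff]
    intro ε hε
    obtain ⟨K, hK⟩ := Metric.cauchySeq_iff.1 hacauchy (ε ^ 2) (by positivity)
    refine ⟨K, fun M hM N hN => ?_⟩
    wlog hNM : N ≤ M generalizing N M
    · rw [dist_comm]; exact this N hN M hM (le_of_not_ge hNM)
    have hd : dist (f M) (f N) ^ 2 = a N - a M := by
      rw [dist_eq_norm, norm_sub_rev]; exact hdiff hNM
    have hd2 : dist (f M) (f N) ^ 2 < ε ^ 2 := by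
      rw [hd]
      calc a N - a M ≤ |a N - a M| := le_abs_self _
        _ = dist (a N) (a M) := (Real.dist_eq _ _).symm
        _ < ε ^ 2 := hK N hN M hM
    exact lt_of_pow_lt_pow_left₀ 2 hε.le hd2
  obtain ⟨y, hy⟩ := cauchySeq_tendsto_of_complete hfcauchy
  -- the limit lies in every range
  have hymem : ∀ n : ℕ, y ∈ LinearMap.range ((V ^ n : H →L[ℂ] H) : H →ₗ[ℂ] H) := by
    intro n
    have hclosed : IsClosed (LinearMap.range ((V ^ n : H →L[ℂ] H) : H →ₗ[ℂ] H) : Set H) := by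
      have : IsClosed (Set.range (V ^ n : H →L[ℂ] H)) :=
        (AddMonoidHomClass.isometry_of_norm _ (wp_pow_norm V h n)).isClosedEmbedding.isClosed_range
      rw [LinearMap.coe_range]; exact this
    refine hclosed.mem_of_tendsto hy (eventually_atTop.2 ⟨n, fun M hM => ?_⟩)
    obtain ⟨k, rfl⟩ := Nat.exists_eq_add_of_le hM
    exact ⟨(V ^ k) (((star V) ^ (n + k)) x), by rw [ContinuousLinearMap.coe_coe, ← mul_apply_eq_comp, ← pow_add]; rfl⟩
  have hy0 : y = 0 := by
    have : y ∈ (⨅ n : ℕ, LinearMap.range ((V ^ n : H →L[ℂ] H) : H →ₗ[ℂ] H)) := Submodule.mem_iInf _ |>.2 hymem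
    rw [hs] at this
    simpa using this
  rwa [hy0] at hy

/-- The wandering projection `E_k = P_k - P_{k+1}`. -/
def wpE (V : H →L[ℂ] H) (k : ℕ) : H →L[ℂ] H := wpP V k - wpP V (k + 1)

lemma wpE_star (V : H →L[ℂ] H) (k : ℕ) : star (wpE V k) = wpE V k := by
  simp [wpE, star_sub, wpP_star]

lemma wpE_orth (V : H →L[ℂ] H) (hV : star V * V = 1) {a b : ℕ} (hab : a ≠ b) :
    wpE V a * wpE V b = 0 := by
  rcases hab.lt_or_gt with hlt | hlt
  · have h1 : a ≤ b := hlt.le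
    have h2 : a ≤ b + 1 := h1.trans (Nat.le_succ b)
    have h3 : a + 1 ≤ b := hlt
    have h4 : a + 1 ≤ b + 1 := Nat.succ_le_succ h1
    simp only [wpE, sub_mul, mul_sub, wpP_mul_le V hV h1, wpP_mul_le V hV h2,
      wpP_mul_le V hV h3, wpP_mul_le V hV h4]
    abel
  · have h1 : b ≤ a := hlt.le
    have h2 : b ≤ a + 1 := h1.trans (Nat.le_succ a)
    have h3 : b + 1 ≤ a := hlt
    have h4 : b + 1 ≤ a + 1 := Nat.succ_le_succ h1
    simp only [wpE, sub_mul, mul_sub, wpP_mul_ge V hV h1, wpP_mul_ge V hV h2,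
      wpP_mul_ge V hV h3, wpP_mul_ge V hV h4]
    abel

lemma wpE_idem (V : H →L[ℂ] H) (hV : star V * V = 1) (k : ℕ) :
    wpE V k * wpE V k = wpE V k := by
  simp only [wpE, sub_mul, mul_sub, wpP_idem V hV, wpP_mul_le V hV (Nat.le_succ k),
    wpP_mul_ge V hV (Nat.le_succ k)]
  abel

lemma wpE_sum (V : H →L[ℂ] H) (N : ℕ) :
    ∑ k ∈ Finset.range N, wpE V k = 1 - wpP V N := by
  unfold wpE
  rw [Finset.sum_range_sub' (wpP V) N]
  simp [wpP]

/-- Adding an orthogonal projection piece only improves the approximation. -/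
lemma wp_proj_ineq (S R : H →L[ℂ] H) (hSstar : star S = S) (hRstar : star R = R)
    (hRidem : R * R = R) (hSR : S * R = 0) (x : H) :
    ‖x - (S + R) x‖ ≤ ‖x - S x‖ := by
  have hRS : R * S = 0 := by
    have := congrArg star hSR
    rwa [star_mul, hRstar, hSstar, star_zero] at this
  set u := x - S x with hu
  have hRu : R x = R u := by
    rw [hu, map_sub, ← mul_apply_eq_comp, hRS]
    simp
  have hexp : x - (S + R) x = u - R u := by
    rw [← hRu, add_apply, hu]
    abel
  have hRR : R (R u) = R u := by rw [← mul_apply_eq_comp, hRidem]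
  have hre : RCLike.re ⟪u, R u⟫ = ‖R u‖ ^ 2 := by
    have heq : ⟪u, R u⟫ = ⟪R u, R u⟫ := by
      calc ⟪u, R u⟫ = ⟪u, R (R u)⟫ := by rw [hRR]
        _ = ⟪adjoint R u, R u⟫ := (adjoint_inner_left _ _ _).symm
        _ = ⟪R u, R u⟫ := by rw [← star_eq_adjoint, hRstar]
    rw [heq, inner_self_eq_norm_sq_to_K]
    simp [← Complex.ofReal_pow]
  have hsq : ‖u - R u‖ ^ 2 ≤ ‖u‖ ^ 2 := by
    rw [@norm_sub_sq ℂ, hre]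
    nlinarith [sq_nonneg ‖R u‖]
  rw [hexp]
  exact le_of_pow_le_pow_left₀ two_ne_zero (norm_nonneg u) hsq

end WanderingAux

/-- If both isometries of a doubly commuting pair are shifts, the projections
`Q(n) = (P¹_{n₁} − P¹_{n₁+1})(P²_{n₂} − P²_{n₂+1})` are mutually orthogonal
and sum strongly to the identity. -/
theorem wandering_projections_sum_to_identity
    {H : Type*} [NormedAddCommGroup H] [InnerProductSpace ℂ H] [CompleteSpace H]
    (V₁ V₂ : H →L[ℂ] H)
    (h₁ : ∀ x, ‖V₁ x‖ = ‖x‖) (h₂ : ∀ x, ‖V₂ x‖ = ‖x‖)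
    (hcomm : V₁ ∘L V₂ = V₂ ∘L V₁)
    (hdc : adjoint V₂ ∘L V₁ = V₁ ∘L adjoint V₂)
    (hs₁ : (⨅ n : ℕ, LinearMap.range ((V₁ ^ n : H →L[ℂ] H) : H →ₗ[ℂ] H)) = ⊥)
    (hs₂ : (⨅ n : ℕ, LinearMap.range ((V₂ ^ n : H →L[ℂ] H) : H →ₗ[ℂ] H)) = ⊥)
    (Q : ℕ × ℕ → (H →L[ℂ] H))
    (hQ : ∀ n : ℕ × ℕ, Q n =
      (((V₁ ^ n.1) ∘L adjoint (V₁ ^ n.1)) - ((V₁ ^ (n.1 + 1)) ∘L adjoint (V₁ ^ (n.1 + 1)))) ∘L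
      (((V₂ ^ n.2) ∘L adjoint (V₂ ^ n.2)) - ((V₂ ^ (n.2 + 1)) ∘L adjoint (V₂ ^ (n.2 + 1))))) :
    (∀ m n : ℕ × ℕ, m ≠ n → Q m ∘L Q n = 0) ∧
    (∀ x : H, HasSum (fun n : ℕ × ℕ => Q n x) x) := by
  have hV1 : star V₁ * V₁ = 1 := wp_star_mul_self V₁ h₁
  have hV2 : star V₂ * V₂ = 1 := wp_star_mul_self V₂ h₂
  -- commutation relations
  have c12 : Commute V₁ V₂ := hcomm
  have c1s2 : Commute V₁ (star V₂) := hdc.symm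
  have cs1s2 : Commute (star V₁) (star V₂) := c12.star_star
  have cs12 : Commute (star V₁) V₂ := by
    have := c1s2.star_star
    rwa [star_star] at this
  have cP : ∀ a b : ℕ, Commute (wpP V₁ a) (wpP V₂ b) := fun a b =>
    ((c12.pow_pow a b).mul_right (c1s2.pow_pow a b)).mul_left
      ((cs12.pow_pow a b).mul_right (cs1s2.pow_pow a b))
  have cE : ∀ a b : ℕ, Commute (wpE V₁ a) (wpE V₂ b) := fun a b =>
    ((cP a b).sub_right (cP a (b + 1))).sub_left
      ((cP (a + 1) b).sub_right (cP (a + 1) (b + 1)))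
  have hQ' : ∀ n : ℕ × ℕ, Q n = wpE V₁ n.1 * wpE V₂ n.2 := by
    intro n
    rw [hQ]
    simp only [wpE, wpP, ← star_eq_adjoint, star_pow]
    rfl
  have hQmul : ∀ m n : ℕ × ℕ,
      Q m * Q n = (wpE V₁ m.1 * wpE V₁ n.1) * (wpE V₂ m.2 * wpE V₂ n.2) := by
    intro m n
    rw [hQ' m, hQ' n, mul_assoc, ← mul_assoc (wpE V₂ m.2), ← (cE n.1 m.2).eq]
    simp only [mul_assoc]
  have hQorth : ∀ m n : ℕ × ℕ, m ≠ n → Q m * Q n = 0 := by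
    intro m n hmn
    rw [hQmul]
    by_cases h : m.1 = n.1
    · have h2 : m.2 ≠ n.2 := fun h2 => hmn (Prod.ext h h2)
      rw [wpE_orth V₂ hV2 h2, mul_zero]
    · rw [wpE_orth V₁ hV1 h, zero_mul]
  have hQidem : ∀ n : ℕ × ℕ, Q n * Q n = Q n := by
    intro n
    rw [hQmul, wpE_idem V₁ hV1, wpE_idem V₂ hV2, ← hQ']
  have hQstar : ∀ n : ℕ × ℕ, star (Q n) = Q n := by
    intro n
    rw [hQ' n, star_mul, wpE_star, wpE_star, ← (cE n.1 n.2).eq]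
  refine ⟨fun m n hmn => hQorth m n hmn, fun x => ?_⟩
  -- box sums
  have hbox : ∀ N : ℕ, (∑ n ∈ Finset.range N ×ˢ Finset.range N, Q n) =
      (1 - wpP V₁ N) * (1 - wpP V₂ N) := by
    intro N
    refine Eq.symm ?_
    calc (1 - wpP V₁ N) * (1 - wpP V₂ N)
        = (∑ a ∈ Finset.range N, wpE V₁ a) * (∑ b ∈ Finset.range N, wpE V₂ b) := by
          rw [wpE_sum, wpE_sum]
      _ = ∑ a ∈ Finset.range N, ∑ b ∈ Finset.range N, wpE V₁ a * wpE V₂ b :=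
          Finset.sum_mul_sum _ _ _ _
      _ = ∑ n ∈ Finset.range N ×ˢ Finset.range N, Q n := by
          rw [Finset.sum_product]
          exact Finset.sum_congr rfl fun a _ =>
            Finset.sum_congr rfl fun b _ => (hQ' (a, b)).symm
  -- convergence of the box partial sums
  have h1x := wpP_tendsto V₁ h₁ hs₁ x
  have h2x := wpP_tendsto V₂ h₂ hs₂ x
  have h3x : Filter.Tendsto (fun N => wpP V₁ N (wpP V₂ N x)) Filter.atTop (nhds 0) :=
    squeeze_zero_norm (fun N => wpP_contract V₁ h₁ N _) (by simpa using h2x.norm)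
  have hSx : Filter.Tendsto (fun N => ((1 - wpP V₁ N) * (1 - wpP V₂ N)) x)
      Filter.atTop (nhds x) := by
    have expand : ∀ N : ℕ, ((1 - wpP V₁ N) * (1 - wpP V₂ N)) x =
        x - wpP V₂ N x - wpP V₁ N x + wpP V₁ N (wpP V₂ N x) := by
      intro N
      simp only [mul_apply_eq_comp, sub_apply, one_apply_eq_self, map_sub]
      abel
    have htend : Filter.Tendsto
        (fun N => x - wpP V₂ N x - wpP V₁ N x + wpP V₁ N (wpP V₂ N x))
        Filter.atTop (nhds (x - 0 - 0 + 0)) :=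
      ((tendsto_const_nhds.sub h2x).sub h1x).add h3x
    simpa [expand] using htend
  -- finite sums of Q's
  have hQsum_star : ∀ s : Finset (ℕ × ℕ), star (∑ n ∈ s, Q n) = ∑ n ∈ s, Q n := by
    intro s
    rw [star_sum]
    exact Finset.sum_congr rfl fun n _ => hQstar n
  have hQsum_idem : ∀ s : Finset (ℕ × ℕ),
      (∑ n ∈ s, Q n) * (∑ n ∈ s, Q n) = ∑ n ∈ s, Q n := by
    intro s
    rw [Finset.sum_mul_sum]
    refine Finset.sum_congr rfl fun m hm => ?_
    calc (∑ n ∈ s, Q m * Q n) = Q m * Q m :=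
          Finset.sum_eq_single_of_mem m hm fun n _ hne => hQorth m n (Ne.symm hne)
      _ = Q m := hQidem m
  have hQsum_disj : ∀ s t : Finset (ℕ × ℕ), Disjoint s t →
      (∑ m ∈ s, Q m) * (∑ n ∈ t, Q n) = 0 := by
    intro s t hst
    rw [Finset.sum_mul_sum]
    refine Finset.sum_eq_zero fun m hm => Finset.sum_eq_zero fun n hn => hQorth m n ?_
    intro h
    exact (Finset.disjoint_left.1 hst hm) (h ▸ hn)
  -- conclude HasSum
  rw [HasSum]
  refine Metric.tendsto_nhds.2 fun ε hε => ?_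
  obtain ⟨N, hN⟩ := (Metric.tendsto_nhds.1 hSx ε hε).exists
  rw [SummationFilter.unconditional_filter, Filter.eventually_atTop]
  refine ⟨Finset.range N ×ˢ Finset.range N, fun s hs => ?_⟩
  set s₀ := Finset.range N ×ˢ Finset.range N with hs₀
  set S := ∑ n ∈ s₀, Q n with hSdef
  set R := ∑ n ∈ s \ s₀, Q n with hRdef
  have hsum_eq : S + R = ∑ n ∈ s, Q n := by
    rw [hSdef, hRdef, add_comm]
    exact Finset.sum_sdiff hs
  have hSR : S * R = 0 := hQsum_disj _ _ Finset.disjoint_sdiff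
  have hineq := wp_proj_ineq S R (hQsum_star _) (hQsum_star _) (hQsum_idem _) hSR x
  calc dist (∑ n ∈ s, Q n x) x = ‖x - (S + R) x‖ := by
        rw [dist_eq_norm, ← norm_neg, hsum_eq, ← ContinuousLinearMap.sum_apply]
        congr 1
        abel
    _ ≤ ‖x - S x‖ := hineq
    _ = dist (((1 - wpP V₁ N) * (1 - wpP V₂ N)) x) x := by
        rw [dist_eq_norm, ← hbox N, ← hSdef, norm_sub_rev]
    _ < ε := hN
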